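/- Let Γ be a countably infinite group. If k ≥ 2, then Free(k^Γ) is dense in k^Γ. -/

import Mathlib

open scoped Pointwise
section ShiftDefs

variable {Γ : Type} [Group Γ] {A B : Type*}

/-- The Bernoulli shift action of `Γ`: `(γ · x)(δ) = x(δγ)`. -/
def shiftAct (γ : Γ) (x : Γ → A) : Γ → A := fun δ => x (δ * γ)

/-- The free part of the shift `Γ ↷ (Γ → A)`. -/
def freePart (Γ : Type) [Group Γ] (A : Type*) : Set (Γ → A) :=
  {x | ∀ γ : Γ, shiftAct γ x = x → γ = 1}

/-- A subshift: a closed shift-invariant subset. -/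
def IsSubshift [TopologicalSpace A] (S : Set (Γ → A)) : Prop :=
  IsClosed S ∧ ∀ γ : Γ, ∀ x ∈ S, shiftAct γ x ∈ S

/-- A subshift of finite type: `⋂ γ (γ · C)` for some clopen `C`. -/
def IsSFT [TopologicalSpace A] (S : Set (Γ → A)) : Prop :=
  ∃ C : Set (Γ → A), IsClopen C ∧ S = ⋂ γ : Γ, shiftAct γ ⁻¹' C

/-- The stabilizer of a point under the shift action. -/
def ptStab (x : Γ → A) : Set Γ := {γ | shiftAct γ x = x}

/-- `Stab(π)`: elements fixing every point in the image of `π` (domain `dom`). -/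
def mapStab (π : (Γ → A) → (Γ → B)) (dom : Set (Γ → A)) : Set Γ :=
  {γ | ∀ x ∈ dom, shiftAct γ (π x) = π x}

/-- `Γ`-equivariance of `π` on the set `dom`. -/
def EquivariantOn (π : (Γ → A) → (Γ → B)) (dom : Set (Γ → A)) : Prop :=
  ∀ x ∈ dom, ∀ γ : Γ, π (shiftAct γ x) = shiftAct γ (π x)

/-- `Col(F, ℓ)`: proper `ℓ`-colorings of the Cayley graph `G(Γ, F)`. -/
def properCol (F : Finset Γ) (ℓ : ℕ) : Set (Γ → Fin ℓ) :=
  {x | ∀ γ : Γ, ∀ σ ∈ F, x γ ≠ x (σ * γ)}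

end ShiftDefs

/-! The free part is the countable intersection, over `γ ≠ 1`, of the sets of points moved by `γ`.
Each of these is open (fixed-point sets are closed) and dense (changing `x` at one coordinate `δ`
outside a given finite set makes `x (δ * γ) ≠ x δ`), so the Baire category theorem in the compact
space `k^Γ` gives density. -/

section FreePart

variable {Γ : Type} [Group Γ] {A : Type*}

lemma freePart_eq_iInter_setOf_shiftAct_ne :
    freePart Γ A = ⋂ γ : {γ : Γ // γ ≠ 1}, {x | shiftAct γ.1 x ≠ x} := by
  ext x
  simp only [freePart, Set.mem_ofPred_eq, Set.mem_iInter, Subtype.forall]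
  exact forall_congr' fun γ => not_imp_not.symm

variable [TopologicalSpace A]

lemma continuous_shiftAct (γ : Γ) : Continuous (shiftAct γ : (Γ → A) → Γ → A) :=
  continuous_pi fun δ => continuous_apply (δ * γ)

lemma isOpen_setOf_shiftAct_ne [T2Space A] (γ : Γ) :
    IsOpen {x : Γ → A | shiftAct γ x ≠ x} :=
  isOpen_ne_fun (continuous_shiftAct γ) continuous_id

lemma dense_setOf_shiftAct_ne [Infinite Γ] [Nontrivial A] {γ : Γ} (hγ : γ ≠ 1) :
    Dense {x : Γ → A | shiftAct γ x ≠ x} := by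
  classical
  rw [dense_iff_inter_open]
  rintro U hU ⟨x, hxU⟩
  obtain ⟨I, u, hxu, hIU⟩ := isOpen_pi_iff.mp hU x hxU
  obtain ⟨δ, hδI⟩ := Infinite.exists_notMem_finset I
  obtain ⟨c, hc⟩ := exists_ne (x (δ * γ))
  refine ⟨Function.update x δ c, hIU fun a ha => ?_, fun hfix => hc ?_⟩
  · rw [Function.update_of_ne (ne_of_mem_of_not_mem ha hδI)]
    exact (hxu a ha).2
  · have hδγ : δ * γ ≠ δ := mul_ne_left.mpr hγ
    simpa [shiftAct, Function.update_of_ne hδγ] using (congrFun hfix δ).symm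

theorem dense_freePart [T2Space A] [Countable Γ] [Infinite Γ] [Nontrivial A]
    [BaireSpace (Γ → A)] : Dense (freePart Γ A) := by
  rw [freePart_eq_iInter_setOf_shiftAct_ne]
  exact dense_iInter_of_isOpen (fun γ => isOpen_setOf_shiftAct_ne γ.1)
    fun γ => dense_setOf_shiftAct_ne γ.2

end FreePart

/-- If `k ≥ 2`, then `Free(k^Γ)` is dense in `k^Γ`. -/
theorem stmt19 {Γ : Type} [Group Γ] [Countable Γ] [Infinite Γ]
    (k : ℕ) (hk : 2 ≤ k) :
    Dense (freePart Γ (Fin k)) := by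
  have : Nontrivial (Fin k) := Fin.nontrivial_iff_two_le.mpr hk
  exact dense_freePart
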